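/- arXiv:2506.16253 — 5 statements merged into one kernel-verified Lean document; each statement's English description precedes it below -/
import Mathlib

section
/- For all integers K ≥ 1 and T ≥ 1, the optimal bookmaking loss L*_{T,K} = V T 0 is the largest real root of the polynomial P_{T,K}; that is, P_{T,K}(V T 0) = 0 and every real x with P_{T,K}(x) = 0 satisfies x ≤ V T 0. -/
open scoped BigOperators

noncomputable section

/-- The probability simplex on `Fin K`. -/
def simplex (K : ℕ) : Set (Fin K → ℝ) :=
  {q | (∀ k, 0 ≤ q k) ∧ ∑ k, q k = 1}

/-- The interior of the probability simplex on `Fin K`. -/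
def simplexInt (K : ℕ) : Set (Fin K → ℝ) :=
  {r | (∀ k, 0 < r k) ∧ ∑ k, r k = 1}

/-- The value function `V K H s` of the online bookmaking game. -/
noncomputable def V (K : ℕ) : ℕ → (Fin K → ℝ) → ℝ
  | 0, s => ⨆ k, s k
  | H + 1, s =>
      sInf ((fun r : Fin K → ℝ =>
        sSup ((fun q : Fin K → ℝ => V K H (fun k => s k + q k / r k)) '' simplex K))
        '' simplexInt K)

/-- Rising factorial `a^{(j)} = a (a+1) ⋯ (a+j-1)`. -/
def rise (a : ℝ) (j : ℕ) : ℝ := ∏ i ∈ Finset.range j, (a + i)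

/-- The polynomial `P_{T,K}(x) = ∑_{m=0}^K (K choose m) (−T)^{(K−m)} x^m`. -/
def P (T K : ℕ) (x : ℝ) : ℝ :=
  ∑ m ∈ Finset.range (K + 1), (K.choose m : ℝ) * rise (-(T : ℝ)) (K - m) * x ^ m

/-!
By induction on `H`, `V K H s` is the largest real root of `F_H(s) = (1 - d/dX)^H ∏ₖ (X - s k)`,
and `V K H` is monotone, convex and above every coordinate. Shifting `s` by `c` shifts the roots
of `F_H(s)` by `c`, so `V K H (s + c) = V K H s + c`.

For the step, let `F = F_H(s)`; then `F - F'` has a largest root `z > V K H s`. Raising the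
single coordinate `k` of `s` by some `u k > 0` raises the value to `z`. As
`F_H(s + u eₖ) = F - u Aₖ` with `Aₖ = (1 - d/dX)^H ∏_{j ≠ k} (X - s j)` and `∑ₖ Aₖ = F'`, the
equation `F(z) = F'(z)` says precisely that `r k = 1 / u k` is a probability vector. Against the
odds `r`, a bet `q` moves the state to the `q`-average of the points `s + u k eₖ`, so convexity
bounds the value by `z`; against any odds some pure outcome `eₖ` already leads to a value `≥ z`.
Thus `V K (H + 1) s = z`, and `F_T(0) = (1 - d/dX)^T X^K` is `P_{T,K}`.
-/

open Polynomial Finset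

noncomputable def lossOp (H : ℕ) : Module.End ℝ ℝ[X] := (1 - derivative) ^ H

lemma lossOp_succ_apply (H : ℕ) (p : ℝ[X]) :
    lossOp (H + 1) p = lossOp H p - derivative (lossOp H p) := by
  rw [lossOp, pow_succ', Module.End.mul_apply]
  rfl

lemma commute_lossOp {f : Module.End ℝ ℝ[X]} (hf : Commute f derivative) (H : ℕ) :
    Commute f (lossOp H) :=
  (((Commute.one_right f).sub_right hf).pow_right H)

lemma lossOp_derivative (H : ℕ) (p : ℝ[X]) :
    lossOp H (derivative p) = derivative (lossOp H p) :=
  (LinearMap.congr_fun (commute_lossOp (Commute.refl _) H) p).symm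

lemma commute_taylor_derivative (c : ℝ) : Commute (taylor c) (derivative : Module.End ℝ ℝ[X]) := by
  refine LinearMap.ext fun p => ?_
  simp [taylor_apply, derivative_comp]

lemma lossOp_taylor (H : ℕ) (c : ℝ) (p : ℝ[X]) :
    lossOp H (taylor c p) = taylor c (lossOp H p) :=
  (LinearMap.congr_fun (commute_lossOp (commute_taylor_derivative c) H) p).symm

lemma Polynomial.Monic.lossOp {p : ℝ[X]} (hp : p.Monic) (H : ℕ) :
    (lossOp H p).Monic ∧ (lossOp H p).natDegree = p.natDegree := by
  induction H with
  | zero => exact ⟨hp, rfl⟩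
  | succ H ih =>
    have hlt := degree_derivative_lt ih.1.ne_zero
    rw [lossOp_succ_apply, natDegree_eq_of_degree_eq (degree_sub_eq_left_of_degree_lt hlt)]
    exact ⟨ih.1.sub_of_left hlt, ih.2⟩

variable {K : ℕ}

noncomputable def bookPoly (H : ℕ) (s : Fin K → ℝ) : ℝ[X] := lossOp H (∏ k, (X - C (s k)))

noncomputable def bookPolyErase (H : ℕ) (s : Fin K → ℝ) (k : Fin K) : ℝ[X] :=
  lossOp H (∏ j ∈ univ.erase k, (X - C (s j)))

lemma bookPoly_monic (H : ℕ) (s : Fin K → ℝ) :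
    (bookPoly H s).Monic ∧ (bookPoly H s).natDegree = K := by
  have hprod := (monic_prod_of_monic univ _ fun k _ => monic_X_sub_C (s k)).lossOp H
  rw [natDegree_prod_of_monic _ _ fun k _ => monic_X_sub_C (s k)] at hprod
  simpa [bookPoly] using hprod

lemma bookPoly_add_single (H : ℕ) (s : Fin K → ℝ) (k : Fin K) (u : ℝ) :
    bookPoly H (s + Pi.single k u) = bookPoly H s - C u * bookPolyErase H s k := by
  have hfactor : ∀ t : Fin K → ℝ, ∏ j, (X - C (t j)) =
      (X - C (t k)) * ∏ j ∈ univ.erase k, (X - C (t j)) := fun t =>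
    (mul_prod_erase univ _ (mem_univ k)).symm
  have herase : ∏ j ∈ univ.erase k, (X - C ((s + Pi.single k u : Fin K → ℝ) j)) =
      ∏ j ∈ univ.erase k, (X - C (s j)) :=
    prod_congr rfl fun j hj => by simp [Pi.single_eq_of_ne (ne_of_mem_erase hj)]
  rw [bookPoly, bookPoly, bookPolyErase, hfactor, hfactor s, herase, ← smul_eq_C_mul,
    ← map_smul, ← map_sub, smul_eq_C_mul]
  congr 1
  simp only [Pi.add_apply, Pi.single_eq_same, C_add]
  ring

lemma sum_bookPolyErase (H : ℕ) (s : Fin K → ℝ) :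
    ∑ k, bookPolyErase H s k = derivative (bookPoly H s) := by
  simp [bookPoly, bookPolyErase, ← lossOp_derivative, derivative_prod_finset]

lemma eval_bookPoly_add_const (H : ℕ) (s : Fin K → ℝ) (c x : ℝ) :
    (bookPoly H (fun j => s j + c)).eval x = (bookPoly H s).eval (x - c) := by
  have hprod : ∏ j, (X - C (s j + c)) = taylor (-c) (∏ j, (X - C (s j))) := by
    rw [← taylorAlgHom_apply, map_prod]
    refine prod_congr rfl fun j _ => ?_
    simp [taylor_X, taylor_C]
    ring
  rw [bookPoly, bookPoly, hprod, lossOp_taylor, taylor_eval, sub_eq_add_neg]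

lemma bookPoly_succ (H : ℕ) (s : Fin K → ℝ) :
    bookPoly (H + 1) s = bookPoly H s - derivative (bookPoly H s) :=
  lossOp_succ_apply H _

lemma eval_bookPoly_add_single (H : ℕ) (s : Fin K → ℝ) (k : Fin K) (u z : ℝ) :
    (bookPoly H (s + Pi.single k u)).eval z =
      (bookPoly H s).eval z - u * (bookPolyErase H s k).eval z := by
  rw [bookPoly_add_single, eval_sub, eval_mul, eval_C]

lemma sum_eval_bookPolyErase {H : ℕ} {s : Fin K → ℝ} {z : ℝ}
    (hz : (bookPoly (H + 1) s).eval z = 0) :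
    ∑ k, (bookPolyErase H s k).eval z = (bookPoly H s).eval z := by
  rw [bookPoly_succ, eval_sub, sub_eq_zero] at hz
  rw [← eval_finsetSum, sum_bookPolyErase, hz]

def IsTopRoot (p : ℝ[X]) (z : ℝ) : Prop :=
  p.eval z = 0 ∧ ∀ x, z < x → 0 < p.eval x

lemma IsTopRoot.unique {p : ℝ[X]} {y z : ℝ} (hy : IsTopRoot p y) (hz : IsTopRoot p z) : y = z := by
  by_contra hne
  rcases lt_or_gt_of_ne hne with h | h
  · exact (hy.2 z h).ne' hz.1
  · exact (hz.2 y h).ne' hy.1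

lemma exists_isTopRoot_ge {p : ℝ[X]} (hp : p.Monic) (hdeg : p.natDegree ≠ 0) {x₀ : ℝ}
    (hx₀ : p.eval x₀ ≤ 0) : ∃ z, x₀ ≤ z ∧ IsTopRoot p z := by
  have htends : Filter.Tendsto (fun x => p.eval x) Filter.atTop Filter.atTop :=
    p.tendsto_atTop_of_leadingCoeff_nonneg (natDegree_pos_iff_degree_pos.mp (by omega))
      (by rw [hp.leadingCoeff]; exact zero_le_one)
  obtain ⟨B, hB⟩ := Filter.eventually_atTop.mp (htends.eventually_gt_atTop 0)
  set S := {x | p.eval x ≤ 0}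
  have hbdd : BddAbove S := ⟨B, fun x hx => not_lt.mp fun h => (hB x h.le).not_ge hx⟩
  have hpos : ∀ x, sSup S < x → 0 < p.eval x := fun x hx =>
    not_le.mp fun h => hx.not_ge (le_csSup hbdd h)
  have hmem : sSup S ∈ S := (isClosed_le p.continuous continuous_const).csSup_mem ⟨x₀, hx₀⟩ hbdd
  have hnonneg : 0 ≤ p.eval (sSup S) :=
    ge_of_tendsto (p.continuous.continuousAt.mono_left (nhdsWithin_le_nhds (s := Set.Ioi _)))
      (eventually_nhdsWithin_of_forall fun x hx => (hpos x hx).le)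
  exact ⟨sSup S, le_csSup hbdd hx₀, le_antisymm hmem hnonneg, hpos⟩

lemma IsTopRoot.exists_gt_isTopRoot_sub_derivative {p : ℝ[X]} (hp : p.Monic)
    (hdeg : p.natDegree ≠ 0) {v : ℝ} (hv : IsTopRoot p v) :
    ∃ z, v < z ∧ IsTopRoot (p - derivative p) z := by
  -- `x ↦ exp (-x) * p x` has derivative `-exp (-x) * (p - p') x`, vanishes at `v` and is positive
  -- to its right, so it cannot be antitone there.
  obtain ⟨x₀, hvx₀, hx₀⟩ : ∃ x₀, v < x₀ ∧ (p - derivative p).eval x₀ < 0 := by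
    by_contra! hcon
    set f : ℝ → ℝ := fun x => Real.exp (-x) * p.eval x
    have hderiv : ∀ x, HasDerivAt f (-(Real.exp (-x) * (p - derivative p).eval x)) x := by
      intro x
      refine (((Real.hasDerivAt_exp (-x)).comp x (hasDerivAt_neg x)).mul
        (p.hasDerivAt x)).congr_deriv ?_
      simp only [eval_sub, Function.comp_apply]
      ring
    have hanti : AntitoneOn f (Set.Ici v) := by
      refine antitoneOn_of_hasDerivWithinAt_nonpos (convex_Ici v) (by fun_prop)
        (fun x _ => (hderiv x).hasDerivWithinAt) fun x hx => ?_
      rw [interior_Ici] at hx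
      exact neg_nonpos.mpr (mul_nonneg (Real.exp_pos _).le (hcon x hx))
    have hle : f (v + 1) ≤ f v := hanti Set.self_mem_Ici (by simp) (by linarith)
    have hpos : 0 < f (v + 1) := mul_pos (Real.exp_pos _) (hv.2 _ (by linarith))
    simp only [f, hv.1, mul_zero] at hle
    linarith
  have hlt := degree_derivative_lt hp.ne_zero
  have hdeg' : (p - derivative p).natDegree = p.natDegree :=
    natDegree_eq_of_degree_eq (degree_sub_eq_left_of_degree_lt hlt)
  obtain ⟨z, hx₀z, hz⟩ := exists_isTopRoot_ge (hp.sub_of_left hlt) (hdeg' ▸ hdeg) hx₀.le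
  exact ⟨z, hvx₀.trans_le hx₀z, hz⟩

structure IsBookValue (H : ℕ) (W : (Fin K → ℝ) → ℝ) : Prop where
  isTopRoot : ∀ s, IsTopRoot (bookPoly H s) (W s)
  monotone : Monotone W
  convexOn : ConvexOn ℝ Set.univ W
  apply_le : ∀ s k, s k ≤ W s

namespace IsBookValue

variable {H : ℕ} {W : (Fin K → ℝ) → ℝ} (hW : IsBookValue H W)
include hW

lemma add_const (s : Fin K → ℝ) (c : ℝ) : W (fun j => s j + c) = W s + c := by
  refine (hW.isTopRoot _).unique ⟨?_, fun x hx => ?_⟩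
  · rw [eval_bookPoly_add_const, add_sub_cancel_right]
    exact (hW.isTopRoot s).1
  · rw [eval_bookPoly_add_const]
    exact (hW.isTopRoot s).2 _ (by linarith)

lemma le_add_of_le {s t : Fin K → ℝ} {c : ℝ} (h : ∀ j, t j ≤ s j + c) : W t ≤ W s + c :=
  hW.add_const s c ▸ hW.monotone h

lemma lipschitzWith : LipschitzWith 1 W :=
  LipschitzWith.of_le_add fun s t => hW.le_add_of_le fun j => by
    linarith [le_abs_self (s j - t j), Real.dist_eq (s j) (t j) ▸ dist_le_pi_dist s t j]

lemma exists_pos_eq_add_single {s : Fin K → ℝ} {z : ℝ} (hz : W s < z) (k : Fin K) :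
    ∃ u, 0 < u ∧ W (s + Pi.single k u) = z := by
  have hcont : Continuous fun u : ℝ => W (s + Pi.single k u) :=
    hW.lipschitzWith.continuous.comp <|
      continuous_const.add (continuous_single (A := fun _ : Fin K => ℝ) k)
  have hsk : 0 ≤ z - s k := by linarith [hW.apply_le s k]
  have hz_le : z ≤ W (s + Pi.single k (z - s k)) := by
    have := hW.apply_le (s + Pi.single k (z - s k)) k
    rwa [Pi.add_apply, Pi.single_eq_same, add_sub_cancel] at this
  obtain ⟨u, hu, hWu⟩ := intermediate_value_Icc hsk hcont.continuousOn
    (⟨by simpa using hz.le, hz_le⟩ : z ∈ Set.Icc _ _)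
  refine ⟨u, lt_of_le_of_ne hu.1 ?_, hWu⟩
  rintro rfl
  simp only [Pi.single_zero, add_zero] at hWu
  exact hz.ne hWu

end IsBookValue

lemma single_mem_simplex (k : Fin K) : Pi.single k 1 ∈ simplex K := by
  refine ⟨fun j => ?_, by simp⟩
  rw [Pi.single_apply]
  split_ifs <;> norm_num

lemma convex_simplexInt : Convex ℝ (simplexInt K) := by
  intro r₁ hr₁ r₂ hr₂ a b ha hb hab
  refine ⟨fun k => ?_, ?_⟩
  · rcases ha.eq_or_lt with rfl | ha
    · simpa [show b = 1 by linarith] using hr₂.1 k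
    · exact add_pos_of_pos_of_nonneg (mul_pos ha (hr₁.1 k)) (mul_nonneg hb (hr₂.1 k).le)
  · simp [sum_add_distrib, ← mul_sum, hr₁.2, hr₂.2, hab]

noncomputable def worstCase (W : (Fin K → ℝ) → ℝ) (s r : Fin K → ℝ) : ℝ :=
  sSup ((fun q => W (fun k => s k + q k / r k)) '' simplex K)

noncomputable def bookStep (W : (Fin K → ℝ) → ℝ) (s : Fin K → ℝ) : ℝ :=
  sInf (worstCase W s '' simplexInt K)

lemma worstCase_le [NeZero K] {W : (Fin K → ℝ) → ℝ} {s r : Fin K → ℝ} {b : ℝ}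
    (h : ∀ q ∈ simplex K, W (fun k => s k + q k / r k) ≤ b) : worstCase W s r ≤ b :=
  csSup_le ⟨_, Pi.single 0 1, single_mem_simplex 0, rfl⟩ <| by
    rintro _ ⟨q, hq, rfl⟩
    exact h q hq

namespace IsBookValue

variable {H : ℕ} {W : (Fin K → ℝ) → ℝ} (hW : IsBookValue H W)
include hW

lemma le_worstCase {s r q : Fin K → ℝ} (hr : r ∈ simplexInt K) (hq : q ∈ simplex K) :
    W (fun k => s k + q k / r k) ≤ worstCase W s r := by
  refine le_csSup ⟨W s + ∑ j, (r j)⁻¹, ?_⟩ ⟨q, hq, rfl⟩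
  rintro _ ⟨q', hq', rfl⟩
  refine hW.le_add_of_le fun j => add_le_add le_rfl ?_
  have hq'j : q' j ≤ 1 := hq'.2 ▸ single_le_sum (fun i _ => hq'.1 i) (mem_univ j)
  calc q' j / r j ≤ 1 / r j := div_le_div_of_nonneg_right hq'j (hr.1 j).le
    _ ≤ ∑ i, (r i)⁻¹ :=
      one_div (r j) ▸ single_le_sum (fun i _ => (inv_pos.2 (hr.1 i)).le) (mem_univ j)

lemma worstCase_mono [NeZero K] {s t r : Fin K → ℝ} (hst : s ≤ t) (hr : r ∈ simplexInt K) :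
    worstCase W s r ≤ worstCase W t r :=
  worstCase_le fun _ hq =>
    (hW.monotone fun j => add_le_add (hst j) le_rfl).trans (hW.le_worstCase hr hq)

lemma worstCase_convex [NeZero K] {s₁ s₂ r₁ r₂ : Fin K → ℝ} (hr₁ : r₁ ∈ simplexInt K)
    (hr₂ : r₂ ∈ simplexInt K) {a b : ℝ} (ha : 0 ≤ a) (hb : 0 ≤ b) (hab : a + b = 1) :
    worstCase W (a • s₁ + b • s₂) (a • r₁ + b • r₂) ≤
      a * worstCase W s₁ r₁ + b * worstCase W s₂ r₂ := by
  refine worstCase_le fun q hq => ?_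
  have hinv : ∀ k, q k / (a * r₁ k + b * r₂ k) ≤ a * (q k / r₁ k) + b * (q k / r₂ k) := by
    intro k
    have h := (convexOn_zpow (-1)).2 (hr₁.1 k) (hr₂.1 k) ha hb hab
    simp only [zpow_neg_one, smul_eq_mul] at h
    simp only [div_eq_mul_inv]
    nlinarith [mul_le_mul_of_nonneg_left h (hq.1 k)]
  calc W (fun k => (a • s₁ + b • s₂) k + q k / (a • r₁ + b • r₂) k)
      ≤ W (a • (fun k => s₁ k + q k / r₁ k) + b • (fun k => s₂ k + q k / r₂ k)) :=
        hW.monotone fun k => by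
          simp only [Pi.add_apply, Pi.smul_apply, smul_eq_mul]
          linarith [hinv k]
    _ ≤ a * W (fun k => s₁ k + q k / r₁ k) + b * W (fun k => s₂ k + q k / r₂ k) :=
        hW.convexOn.2 trivial trivial ha hb hab
    _ ≤ a * worstCase W s₁ r₁ + b * worstCase W s₂ r₂ := by
        gcongr
        exacts [hW.le_worstCase hr₁ hq, hW.le_worstCase hr₂ hq]

lemma exists_worstCase_le [NeZero K] {s : Fin K → ℝ} {z : ℝ} (hsz : W s < z)
    (hz : (bookPoly (H + 1) s).eval z = 0) : ∃ r ∈ simplexInt K, worstCase W s r ≤ z := by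
  choose u hu_pos hu using fun k => hW.exists_pos_eq_add_single hsz k
  have hF : 0 < (bookPoly H s).eval z := (hW.isTopRoot s).2 z hsz
  have hu_inv : ∀ k, (u k)⁻¹ = (bookPolyErase H s k).eval z / (bookPoly H s).eval z := by
    intro k
    have h := (hW.isTopRoot (s + Pi.single k (u k))).1
    rw [hu, eval_bookPoly_add_single, sub_eq_zero] at h
    field_simp [(hu_pos k).ne']
    linarith
  have hsum : ∑ k, (u k)⁻¹ = 1 := by
    simp only [hu_inv, ← sum_div, sum_eval_bookPolyErase hz, div_self hF.ne']
  refine ⟨fun k => (u k)⁻¹, ⟨fun k => inv_pos.2 (hu_pos k), hsum⟩, worstCase_le fun q hq => ?_⟩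
  have hcomb : (fun j => s j + q j / (u j)⁻¹) = ∑ k, q k • (s + Pi.single k (u k)) := by
    ext j
    simp [Finset.sum_apply, Pi.single_apply, sum_add_distrib, ← sum_mul, hq.2]
  calc W (fun j => s j + q j / (u j)⁻¹) ≤ ∑ k, q k • W (s + Pi.single k (u k)) :=
        hcomb ▸ hW.convexOn.map_sum_le (fun k _ => hq.1 k) hq.2 fun _ _ => trivial
    _ = z := by simp [hu, ← sum_mul, hq.2]

lemma le_worstCase_of_isRoot [NeZero K] {s r : Fin K → ℝ} {z : ℝ}
    (hz : (bookPoly (H + 1) s).eval z = 0) (hr : r ∈ simplexInt K) : z ≤ worstCase W s r := by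
  obtain ⟨k, hk⟩ : ∃ k, z ≤ W (fun j => s j + (Pi.single k 1 : Fin K → ℝ) j / r j) := by
    by_contra! hlt
    have hA : ∀ k, (bookPolyErase H s k).eval z < r k * (bookPoly H s).eval z := by
      intro k
      have hshift :
          (fun j => s j + (Pi.single k 1 : Fin K → ℝ) j / r j) = s + Pi.single k (r k)⁻¹ := by
        ext j
        rcases eq_or_ne j k with rfl | hjk <;> simp [*]
      have h := (hW.isTopRoot _).2 z (hshift ▸ hlt k)
      rw [eval_bookPoly_add_single, sub_pos, inv_mul_lt_iff₀ (hr.1 k)] at h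
      exact h
    have := sum_lt_sum_of_nonempty univ_nonempty fun k _ => hA k
    rw [sum_eval_bookPolyErase hz, ← sum_mul, hr.2, one_mul] at this
    exact this.false
  exact hk.trans (hW.le_worstCase hr (single_mem_simplex k))

lemma isLeast_worstCase [NeZero K] {s : Fin K → ℝ} {z : ℝ} (hsz : W s < z)
    (hz : (bookPoly (H + 1) s).eval z = 0) : IsLeast (worstCase W s '' simplexInt K) z := by
  obtain ⟨r, hr, hle⟩ := hW.exists_worstCase_le hsz hz
  refine ⟨⟨r, hr, le_antisymm hle (hW.le_worstCase_of_isRoot hz hr)⟩, ?_⟩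
  rintro _ ⟨r', hr', rfl⟩
  exact hW.le_worstCase_of_isRoot hz hr'

lemma bookStep_spec [NeZero K] (s : Fin K → ℝ) :
    W s < bookStep W s ∧ IsTopRoot (bookPoly (H + 1) s) (bookStep W s) ∧
      IsLeast (worstCase W s '' simplexInt K) (bookStep W s) := by
  obtain ⟨hmonic, hdeg⟩ := bookPoly_monic H s
  obtain ⟨z, hsz, hz⟩ := (hW.isTopRoot s).exists_gt_isTopRoot_sub_derivative hmonic
    (hdeg.symm ▸ NeZero.ne K)
  rw [← bookPoly_succ] at hz
  have hleast := hW.isLeast_worstCase hsz hz.1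
  rw [bookStep, hleast.csInf_eq]
  exact ⟨hsz, hz, hleast⟩

lemma succ [NeZero K] : IsBookValue (H + 1) (bookStep W) where
  isTopRoot s := (hW.bookStep_spec s).2.1
  monotone s t hst := by
    obtain ⟨⟨r, hr, hrt⟩, -⟩ := (hW.bookStep_spec t).2.2
    exact ((hW.bookStep_spec s).2.2.2 ⟨r, hr, rfl⟩).trans (hrt ▸ hW.worstCase_mono hst hr)
  convexOn := by
    refine ⟨convex_univ, fun s₁ _ s₂ _ a b ha hb hab => ?_⟩
    obtain ⟨⟨r₁, hr₁, h₁⟩, -⟩ := (hW.bookStep_spec s₁).2.2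
    obtain ⟨⟨r₂, hr₂, h₂⟩, -⟩ := (hW.bookStep_spec s₂).2.2
    rw [smul_eq_mul, smul_eq_mul, ← h₁, ← h₂]
    exact ((hW.bookStep_spec _).2.2.2 ⟨_, convex_simplexInt hr₁ hr₂ ha hb hab, rfl⟩).trans
      (hW.worstCase_convex hr₁ hr₂ ha hb hab)
  apply_le s k := (hW.apply_le s k).trans (hW.bookStep_spec s).1.le

end IsBookValue

lemma eval_bookPoly_zero_left (s : Fin K → ℝ) (x : ℝ) :
    (bookPoly 0 s).eval x = ∏ k, (x - s k) := by
  simp [bookPoly, lossOp, eval_prod]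

lemma isBookValue_zero [NeZero K] : IsBookValue 0 (V K 0) where
  isTopRoot s := by
    obtain ⟨k₀, hk₀⟩ := exists_eq_ciSup_of_finite (f := s)
    refine ⟨?_, fun x hx => ?_⟩
    · rw [eval_bookPoly_zero_left]
      exact prod_eq_zero (mem_univ k₀) (sub_eq_zero.2 hk₀.symm)
    · rw [eval_bookPoly_zero_left]
      exact prod_pos fun k _ => sub_pos.2 ((le_ciSup (Finite.bddAbove_range s) k).trans_lt hx)
  monotone s t hst := ciSup_mono (Finite.bddAbove_range t) hst
  convexOn := by
    refine ⟨convex_univ, fun s _ t _ a b ha hb hab => ciSup_le fun k => ?_⟩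
    simp only [Pi.add_apply, Pi.smul_apply, smul_eq_mul]
    gcongr
    exacts [le_ciSup (Finite.bddAbove_range s) k, le_ciSup (Finite.bddAbove_range t) k]
  apply_le s k := le_ciSup (Finite.bddAbove_range s) k

lemma isBookValue_V [NeZero K] : ∀ H, IsBookValue H (V K H)
  | 0 => isBookValue_zero
  | H + 1 => (isBookValue_V H).succ

lemma rise_sub_one (a : ℝ) (j : ℕ) : rise (a - 1) j = rise a j - j * rise a (j - 1) := by
  cases j with
  | zero => simp [rise]
  | succ j =>
    rw [rise, prod_range_succ', rise, prod_range_succ, Nat.add_sub_cancel, rise]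
    push_cast
    simp only [sub_add_add_cancel, add_zero]
    ring

lemma coeff_lossOp_X_pow (T K m : ℕ) :
    (lossOp T (X ^ K)).coeff m = K.choose m * rise (-T) (K - m) := by
  induction T generalizing m with
  | zero =>
    rcases lt_trichotomy m K with h | rfl | h
    · obtain ⟨j, hj⟩ := Nat.exists_eq_add_of_lt h
      simp [lossOp, coeff_X_pow, rise, hj, add_assoc, prod_range_succ']
    · simp [lossOp, rise]
    · simp [lossOp, coeff_X_pow, h.ne', Nat.choose_eq_zero_of_lt h]
  | succ T ih =>
    have hchoose : (K.choose (m + 1) : ℝ) * (m + 1) = K.choose m * (K - m : ℕ) := by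
      exact_mod_cast Nat.choose_succ_right_eq K m
    rw [lossOp_succ_apply, coeff_sub, coeff_derivative, ih, ih,
      show K - (m + 1) = K - m - 1 by omega,
      show (-((T + 1 : ℕ) : ℝ)) = -T - 1 by push_cast; ring, rise_sub_one]
    linear_combination (-rise (-T) (K - m - 1)) * hchoose

lemma eval_lossOp_X_pow (T K : ℕ) (x : ℝ) : (lossOp T (X ^ K)).eval x = P T K x := by
  have hdeg : (lossOp T (X ^ K)).natDegree < K + 1 := by
    rw [((monic_X_pow K).lossOp T).2, natDegree_X_pow]
    exact K.lt_succ_self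
  simp [eval_eq_sum_range' hdeg, coeff_lossOp_X_pow, P]

lemma bookPoly_zero_right (H : ℕ) : bookPoly H (0 : Fin K → ℝ) = lossOp H (X ^ K) := by
  simp [bookPoly]

theorem optimal_loss_largest_root_general (K T : ℕ) (hK : 1 ≤ K) :
    P T K (V K T 0) = 0 ∧ ∀ x : ℝ, P T K x = 0 → x ≤ V K T 0 := by
  have : NeZero K := ⟨by omega⟩
  obtain ⟨hroot, hpos⟩ := (isBookValue_V T).isTopRoot (0 : Fin K → ℝ)
  simp only [bookPoly_zero_right, eval_lossOp_X_pow] at hroot hpos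
  exact ⟨hroot, fun x hx => not_lt.mp fun hlt => (hpos x hlt).ne' hx⟩

/-- The optimal bookmaking loss `V K T 0` is the largest real root of `P_{T,K}`. -/
theorem optimal_loss_largest_root (K T : ℕ) (hK : 1 ≤ K) (hT : 1 ≤ T) :
    P T K (V K T 0) = 0 ∧ ∀ x : ℝ, P T K x = 0 → x ≤ V K T 0 :=
  optimal_loss_largest_root_general K T hK
end
end

section
/- For every integer T ≥ 1, in the case K = 2 the optimal bookmaking loss satisfies V T 0 = T + √T. -/
/-!
For `K = 2` the value has the closed form `V H s = (s 0 + s 1) / 2 + H + √(H + d ^ 2)`,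
`d = (s 0 - s 1) / 2`, by induction on `H`. The closed form is convex, so against fixed odds `r`
the adversary's best reply is a single outcome, and the bookmaker's best odds make both outcomes
equally costly: `r = ((y + d) / (2 * y), (y - d) / (2 * y))` with `y = 1 + √(H + 1 + d ^ 2)`,
which yields the closed form at `H + 1`.
-/

open scoped BigOperators

noncomputable section

open Set

lemma ciSup_fin_two {α : Type*} [ConditionallyCompleteLinearOrder α] (f : Fin 2 → α) :
    ⨆ i, f i = max (f 0) (f 1) :=
  eq_of_forall_ge_iff fun c => by simp [ciSup_le_iff (finite_range f).bddAbove, Fin.forall_fin_two]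

section ConvexVertex

variable {K : ℕ}

lemma add_div_eq_sum_smul {q : Fin K → ℝ} (hq : ∑ k, q k = 1) (s r : Fin K → ℝ) :
    s + q / r = ∑ i, q i • (s + Pi.single i (1 / r i)) := by
  ext k
  simp [Finset.sum_add_distrib, ← Finset.sum_mul, hq, Pi.single_apply, div_eq_mul_inv]

lemma ConvexOn.exists_le_add_single {F : (Fin K → ℝ) → ℝ} (hF : ConvexOn ℝ univ F)
    {q : Fin K → ℝ} (hq : q ∈ simplex K) (s r : Fin K → ℝ) :
    ∃ i, F (s + q / r) ≤ F (s + Pi.single i (1 / r i)) := by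
  obtain ⟨i, -, hi⟩ := hF.exists_ge_of_centerMass (t := Finset.univ) (w := q)
    (p := fun i => s + Pi.single i (1 / r i)) (fun i _ => hq.1 i) (by rw [hq.2]; exact one_pos)
    (fun _ _ => mem_univ _)
  rw [Finset.centerMass_eq_of_sum_1 _ _ hq.2, ← add_div_eq_sum_smul hq.2] at hi
  exact ⟨i, hi⟩

lemma ConvexOn.sSup_image_simplex [NeZero K] {F : (Fin K → ℝ) → ℝ} (hF : ConvexOn ℝ univ F)
    (s r : Fin K → ℝ) :
    sSup ((fun q => F (fun k => s k + q k / r k)) '' simplex K) =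
      ⨆ i, F (s + Pi.single i (1 / r i)) := by
  have hbdd : BddAbove (range fun i => F (s + Pi.single i (1 / r i))) :=
    (finite_range _).bddAbove
  have hvertex (i : Fin K) : Pi.single i 1 ∈ simplex K :=
    ⟨fun k => by by_cases h : k = i <;> simp [h], by simp⟩
  have hle : ∀ x ∈ (fun q => F (fun k => s k + q k / r k)) '' simplex K,
      x ≤ ⨆ i, F (s + Pi.single i (1 / r i)) := by
    rintro _ ⟨q, hq, rfl⟩
    obtain ⟨i, hi⟩ := hF.exists_le_add_single hq s r
    exact hi.trans (le_ciSup hbdd i)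
  refine le_antisymm (csSup_le ⟨_, Pi.single 0 1, hvertex 0, rfl⟩ hle) (ciSup_le fun i => ?_)
  refine le_csSup ⟨_, hle⟩ ⟨Pi.single i 1, hvertex i, ?_⟩
  refine congrArg F (funext fun k => ?_)
  by_cases h : k = i <;> simp [h]

end ConvexVertex

lemma sqrt_add_sq_le_add_abs_sub {h : ℝ} (hh : 0 ≤ h) (u v : ℝ) :
    √(h + v ^ 2) ≤ √(h + u ^ 2) + |v - u| := by
  have hu : |u| ≤ √(h + u ^ 2) := Real.abs_le_sqrt (by linarith)
  have hcross : u * (v - u) ≤ √(h + u ^ 2) * |v - u| := by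
    calc u * (v - u) ≤ |u| * |v - u| := by rw [← abs_mul]; exact le_abs_self _
      _ ≤ _ := by gcongr
  rw [Real.sqrt_le_left (by positivity)]
  nlinarith [Real.sq_sqrt (show 0 ≤ h + u ^ 2 by positivity), sq_abs (v - u)]

lemma convexOn_sqrt_add_sq {h : ℝ} (hh : 0 ≤ h) : ConvexOn ℝ univ fun x => √(h + x ^ 2) := by
  refine ⟨convex_univ, fun x _ y _ a b ha hb hab => ?_⟩
  simp only [smul_eq_mul]
  have hx := Real.sq_sqrt (show 0 ≤ h + x ^ 2 by positivity)
  have hy := Real.sq_sqrt (show 0 ≤ h + y ^ 2 by positivity)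
  -- Cauchy–Schwarz for the vectors (√h, x) and (√h, y)
  have hcs : h + x * y ≤ √(h + x ^ 2) * √(h + y ^ 2) := by
    rw [← Real.sqrt_mul (by positivity)]
    exact Real.le_sqrt_of_sq_le (by nlinarith [mul_nonneg hh (sq_nonneg (x - y))])
  rw [Real.sqrt_le_left (by positivity), add_sq (a * √(h + x ^ 2)), mul_pow, mul_pow, hx, hy]
  have hh1 : h = h * (a + b) ^ 2 := by rw [hab]; ring
  nlinarith [mul_le_mul_of_nonneg_left hcs (mul_nonneg ha hb)]

def binaryValue (H : ℕ) (s : Fin 2 → ℝ) : ℝ :=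
  (s 0 + s 1) / 2 + H + √(H + ((s 0 - s 1) / 2) ^ 2)

lemma convexOn_binaryValue (H : ℕ) : ConvexOn ℝ univ (binaryValue H) := by
  refine ⟨convex_univ, fun x _ y _ a b ha hb hab => ?_⟩
  have h := (convexOn_sqrt_add_sq (Nat.cast_nonneg H)).2 (mem_univ ((x 0 - x 1) / 2))
    (mem_univ ((y 0 - y 1) / 2)) ha hb hab
  simp only [binaryValue, smul_eq_mul, Pi.add_apply, Pi.smul_apply] at h ⊢
  rw [show (a * x 0 + b * y 0 - (a * x 1 + b * y 1)) / 2
    = a * ((x 0 - x 1) / 2) + b * ((y 0 - y 1) / 2) by ring]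
  linear_combination h - (H : ℝ) * hab

lemma binaryValue_zero (s : Fin 2 → ℝ) : binaryValue 0 s = ⨆ k, s k := by
  rw [ciSup_fin_two, binaryValue, Nat.cast_zero, zero_add, Real.sqrt_sq_eq_abs, abs_div, abs_two]
  linarith [max_sub_min_eq_abs' (s 0) (s 1), min_add_max (s 0) (s 1)]

def stakeValue (h d ρ : ℝ) : ℝ :=
  ρ / 2 + √(h + (d + ρ / 2) ^ 2)

lemma monotone_stakeValue {h : ℝ} (hh : 0 ≤ h) (d : ℝ) : Monotone (stakeValue h d) := by
  intro ρ σ hρσ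
  have := sqrt_add_sq_le_add_abs_sub hh (d + σ / 2) (d + ρ / 2)
  rw [abs_of_nonpos (by linarith)] at this
  unfold stakeValue
  linarith

lemma binaryValue_add_single_zero (H : ℕ) (s : Fin 2 → ℝ) (ρ : ℝ) :
    binaryValue H (s + Pi.single 0 ρ) = (s 0 + s 1) / 2 + H + stakeValue H ((s 0 - s 1) / 2) ρ := by
  simp only [binaryValue, stakeValue, Fin.isValue, Pi.add_apply, Pi.single_eq_same,
    Pi.single_eq_of_ne zero_ne_one.symm, add_zero]
  ring_nf

lemma binaryValue_add_single_one (H : ℕ) (s : Fin 2 → ℝ) (ρ : ℝ) :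
    binaryValue H (s + Pi.single 1 ρ) =
      (s 0 + s 1) / 2 + H + stakeValue H (-((s 0 - s 1) / 2)) ρ := by
  simp only [binaryValue, stakeValue, Fin.isValue, Pi.add_apply, Pi.single_eq_same,
    Pi.single_eq_of_ne zero_ne_one, add_zero]
  ring_nf

/-- `y` solves `y ^ 2 - 2 * y = h + d ^ 2`, which is what makes the square root collapse. -/
lemma stakeValue_equalizer {h : ℝ} (hh : 0 ≤ h) (d : ℝ) {y : ℝ} (hy : y = 1 + √(h + 1 + d ^ 2)) :
    0 < y + d ∧ stakeValue h d (2 * y / (y + d)) = y := by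
  have hS := Real.sq_sqrt (show 0 ≤ h + 1 + d ^ 2 by positivity)
  have hdS : |d| ≤ √(h + 1 + d ^ 2) := Real.abs_le_sqrt (by linarith)
  have hyd : 1 ≤ y + d := by rw [hy]; linarith [neg_abs_le d]
  refine ⟨by linarith, ?_⟩
  have hy2 : y ^ 2 - 2 * y = h + d ^ 2 := by rw [hy]; linear_combination hS
  have ht : y / (y + d) * (y + d) = y := div_mul_cancel₀ y (by linarith)
  have hsq : h + (d + y / (y + d)) ^ 2 = (y - y / (y + d)) ^ 2 := by
    linear_combination 2 * ht - hy2
  have hle : y / (y + d) ≤ y := div_le_self (by linarith [abs_nonneg d]) hyd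
  rw [stakeValue, show 2 * y / (y + d) / 2 = y / (y + d) by ring, hsq, Real.sqrt_sq (by linarith)]
  ring

lemma mem_simplexInt_two {r : Fin 2 → ℝ} :
    r ∈ simplexInt 2 ↔ 0 < r 0 ∧ 0 < r 1 ∧ r 0 + r 1 = 1 := by
  simp [simplexInt, Fin.forall_fin_two, Fin.sum_univ_two, and_assoc]

lemma le_max_of_monotone_of_add_eq_one {f g : ℝ → ℝ} (hf : Monotone f) (hg : Monotone g) {p₀ p₁ r₀ r₁ c : ℝ}
    (hp : p₀ + p₁ = 1) (hr : r₀ + r₁ = 1) (hr₀ : 0 < r₀) (hr₁ : 0 < r₁)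
    (hfp : f (1 / p₀) = c) (hgp : g (1 / p₁) = c) : c ≤ max (f (1 / r₀)) (g (1 / r₁)) := by
  rcases le_total r₀ p₀ with h | h
  · exact hfp ▸ le_max_of_le_left (hf (one_div_le_one_div_of_le hr₀ h))
  · exact hgp ▸ le_max_of_le_right (hg (one_div_le_one_div_of_le hr₁ (by linarith)))

lemma isLeast_max_stakeValue {h : ℝ} (hh : 0 ≤ h) (d : ℝ) :
    IsLeast ((fun r : Fin 2 → ℝ => max (stakeValue h d (1 / r 0)) (stakeValue h (-d) (1 / r 1)))
      '' simplexInt 2) (1 + √(h + 1 + d ^ 2)) := by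
  set y := 1 + √(h + 1 + d ^ 2) with hy
  obtain ⟨hyd₀, hval₀⟩ := stakeValue_equalizer hh d hy
  obtain ⟨hyd₁, hval₁⟩ := stakeValue_equalizer hh (-d) (y := y) (by rw [neg_sq])
  have hp₀ : 1 / ((y + d) / (2 * y)) = 2 * y / (y + d) := one_div_div _ _
  have hp₁ : 1 / ((y + -d) / (2 * y)) = 2 * y / (y + -d) := one_div_div _ _
  have hpsum : (y + d) / (2 * y) + (y + -d) / (2 * y) = 1 := by
    field_simp [show y ≠ 0 by positivity]
    ring
  refine ⟨⟨![(y + d) / (2 * y), (y + -d) / (2 * y)], ?_, ?_⟩, ?_⟩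
  · have hy2 : 0 < 2 * y := by positivity
    exact mem_simplexInt_two.2 ⟨div_pos hyd₀ hy2, div_pos hyd₁ hy2, hpsum⟩
  · simp only [Matrix.cons_val_zero, Matrix.cons_val_one, hp₀, hp₁, hval₀, hval₁, max_self]
  · rintro _ ⟨r, hr, rfl⟩
    obtain ⟨hr₀, hr₁, hrsum⟩ := mem_simplexInt_two.1 hr
    exact le_max_of_monotone_of_add_eq_one (monotone_stakeValue hh d) (monotone_stakeValue hh (-d)) hpsum hrsum
      hr₀ hr₁ (hp₀ ▸ hval₀) (hp₁ ▸ hval₁)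

lemma V_two_succ {H : ℕ} (ih : ∀ s, V 2 H s = binaryValue H s) (s : Fin 2 → ℝ) :
    V 2 (H + 1) s = binaryValue (H + 1) s := by
  set m := (s 0 + s 1) / 2
  set d := (s 0 - s 1) / 2
  have hinner (r : Fin 2 → ℝ) :
      sSup ((fun q => V 2 H (fun k => s k + q k / r k)) '' simplex 2) =
        m + H + max (stakeValue H d (1 / r 0)) (stakeValue H (-d) (1 / r 1)) := by
    simp_rw [ih]
    rw [(convexOn_binaryValue H).sSup_image_simplex, ciSup_fin_two, binaryValue_add_single_zero,
      binaryValue_add_single_one, max_add_add_left]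
  have htarget : binaryValue (H + 1) s = m + H + (1 + √(H + 1 + d ^ 2)) := by
    simp only [binaryValue, d, m]
    push_cast
    ring
  have hleast := (monotone_id.const_add (m + H)).map_isLeast
    (isLeast_max_stakeValue (Nat.cast_nonneg H) d)
  simp only [image_image, id] at hleast
  rw [V, htarget, ← hleast.csInf_eq]
  simp_rw [hinner]

lemma V_two_eq_binaryValue (H : ℕ) (s : Fin 2 → ℝ) : V 2 H s = binaryValue H s := by
  induction H generalizing s with
  | zero => exact (binaryValue_zero s).symm
  | succ H ih => exact V_two_succ ih s

theorem optimal_loss_binary_general (T : ℕ) :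
    V 2 T 0 = (T : ℝ) + Real.sqrt T := by
  simp [V_two_eq_binaryValue, binaryValue]

/-- For binary games (`K = 2`), the optimal bookmaking loss is `T + √T`. -/
theorem optimal_loss_binary (T : ℕ) (hT : 1 ≤ T) :
    V 2 T 0 = (T : ℝ) + Real.sqrt T :=
  optimal_loss_binary_general T
end
end

section
/- For every integer T ≥ 1, in the case K = 3 the optimal bookmaking loss satisfies V T 0 = T + 2·√T · cos((1/3) · arccos(T^{−1/2})). -/
/-!
With `n` rounds left and cumulative payouts `s`, the value is the `ℓ` whose slack
`u k = ℓ - s k - n` is nonnegative and solves `F_n(u) = u₀u₁u₂ - n(u₀ + u₁ + u₂) - 2n = 0`.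
This propagates through one round because `F_n(u) = F_{n+1}(u - 1) + ∑ₖ ∂ₖF_n(u)` and `F_n` is
affine in each coordinate. Prices `r ∝ ∇F_n(u)` keep `F_n ≥ 0` against every outcome
distribution `q`, which bounds the value from above. Against any prices, some outcome has
`r k ≤ ∂ₖF_n / ∑ ∂F_n`, and staking everything on it restores `F_n = 0`, which bounds the value
from below. At `s = 0` every slack equals the same `x`, the cubic becomes
`x³ - 3Tx - 2T = 0`, and Viète's trigonometric formula gives its root.
-/

open scoped BigOperators

noncomputable section

open Finset

namespace Bookmaking

variable {K : ℕ}

section Simplex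

theorem simplexInt_subset_simplex : simplexInt K ⊆ simplex K :=
  fun _ hr => ⟨fun k => (hr.1 k).le, hr.2⟩

theorem le_one_of_mem_simplex {q : Fin K → ℝ} (hq : q ∈ simplex K) (k : Fin K) : q k ≤ 1 :=
  hq.2 ▸ single_le_sum (fun j _ => hq.1 j) (mem_univ k)

theorem single_mem_simplex (k : Fin K) : (Pi.single k 1 : Fin K → ℝ) ∈ simplex K := by
  refine ⟨fun j => ?_, by simp [sum_pi_single']⟩
  by_cases h : j = k <;> simp [h]

theorem uniform_mem_simplexInt [NeZero K] : (fun _ => (K : ℝ)⁻¹) ∈ simplexInt K := by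
  refine ⟨fun _ => inv_pos.2 (Nat.cast_pos.2 (NeZero.pos K)), ?_⟩
  simp [NeZero.ne K]

end Simplex

section Value

def worstCase (K H : ℕ) (s r : Fin K → ℝ) : ℝ :=
  sSup ((fun q : Fin K → ℝ => V K H (fun k => s k + q k / r k)) '' simplex K)

theorem V_zero (s : Fin K → ℝ) : V K 0 s = ⨆ k, s k := rfl

theorem V_succ (H : ℕ) (s : Fin K → ℝ) :
    V K (H + 1) s = sInf (worstCase K H s '' simplexInt K) := by
  rw [V]
  rfl

theorem bddAbove_image_of_V_le {H : ℕ} {c : ℝ} (hV : ∀ t, V K H t ≤ (⨆ k, t k) + c)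
    (s : Fin K → ℝ) {r : Fin K → ℝ} (hr : r ∈ simplexInt K) :
    BddAbove ((fun q : Fin K → ℝ => V K H (fun k => s k + q k / r k)) '' simplex K) := by
  refine ⟨(⨆ k, (s k + (r k)⁻¹)) + c, ?_⟩
  rintro _ ⟨q, hq, rfl⟩
  refine (hV _).trans (add_le_add_left (ciSup_mono (Finite.bddAbove_range _) fun k => ?_) c)
  rw [div_eq_mul_inv]
  gcongr
  exact mul_le_of_le_one_left (inv_pos.2 (hr.1 k)).le (le_one_of_mem_simplex hq k)

/-- The outcome distribution `q = r` adds one to every coordinate whatever the prices `r` are. -/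
theorem bddBelow_image_worstCase {H : ℕ} {s : Fin K → ℝ}
    (hb : ∀ r ∈ simplexInt K,
      BddAbove ((fun q : Fin K → ℝ => V K H (fun k => s k + q k / r k)) '' simplex K)) :
    BddBelow (worstCase K H s '' simplexInt K) := by
  refine ⟨V K H (fun k => s k + 1), Set.forall_mem_image.2 fun r hr => ?_⟩
  refine le_csSup_of_le (hb r hr) ⟨r, simplexInt_subset_simplex hr, rfl⟩ (le_of_eq ?_)
  congr 1
  ext k
  rw [div_self (hr.1 k).ne']

variable [NeZero K]

theorem worstCase_le {H : ℕ} {s r : Fin K → ℝ} {c : ℝ}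
    (h : ∀ q ∈ simplex K, V K H (fun k => s k + q k / r k) ≤ c) : worstCase K H s r ≤ c :=
  csSup_le ⟨_, Set.mem_image_of_mem _ (single_mem_simplex 0)⟩ (Set.forall_mem_image.2 h)

theorem le_V_succ {H : ℕ} {s : Fin K → ℝ} {c : ℝ}
    (h : ∀ r ∈ simplexInt K, c ≤ worstCase K H s r) : c ≤ V K (H + 1) s :=
  le_csInf ⟨_, Set.mem_image_of_mem _ uniform_mem_simplexInt⟩ (Set.forall_mem_image.2 h)

theorem V_le_iSup_add (H : ℕ) (s : Fin K → ℝ) : V K H s ≤ (⨆ k, s k) + K * H := by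
  induction H generalizing s with
  | zero => simp [V_zero]
  | succ H ih =>
    have hbdd : BddBelow (worstCase K H s '' simplexInt K) :=
      bddBelow_image_worstCase fun r hr => bddAbove_image_of_V_le ih s hr
    rw [V_succ]
    refine (csInf_le hbdd (Set.mem_image_of_mem _ uniform_mem_simplexInt)).trans
      (worstCase_le fun q hq => (ih _).trans ?_)
    have hstep : (⨆ k, (s k + q k / (K : ℝ)⁻¹)) ≤ (⨆ k, s k) + K :=
      ciSup_le fun k => by
        rw [div_inv_eq_mul]
        gcongr
        · exact le_ciSup (Finite.bddAbove_range _) k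
        · exact mul_le_of_le_one_left (Nat.cast_nonneg K) (le_one_of_mem_simplex hq k)
    push_cast
    linarith

theorem bddAbove_image (H : ℕ) (s : Fin K → ℝ) {r : Fin K → ℝ} (hr : r ∈ simplexInt K) :
    BddAbove ((fun q : Fin K → ℝ => V K H (fun k => s k + q k / r k)) '' simplex K) :=
  bddAbove_image_of_V_le (V_le_iSup_add H) s hr

theorem le_worstCase {H : ℕ} {s r q : Fin K → ℝ} (hr : r ∈ simplexInt K) (hq : q ∈ simplex K) :
    V K H (fun k => s k + q k / r k) ≤ worstCase K H s r :=
  le_csSup (bddAbove_image H s hr) (Set.mem_image_of_mem _ hq)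

theorem V_succ_le_worstCase {H : ℕ} {s r : Fin K → ℝ} (hr : r ∈ simplexInt K) :
    V K (H + 1) s ≤ worstCase K H s r :=
  csInf_le (bddBelow_image_worstCase fun _ hr => bddAbove_image H s hr)
    (Set.mem_image_of_mem _ hr)

theorem V_mono (H : ℕ) : Monotone (V K H) := by
  induction H with
  | zero => exact fun s t h => ciSup_mono (Finite.bddAbove_range _) h
  | succ H ih =>
    refine fun s t h => le_V_succ fun r hr => (V_succ_le_worstCase hr).trans
      (worstCase_le fun q hq => (ih fun k => ?_).trans (le_worstCase hr hq))
    exact add_le_add_left (h k) _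

end Value

section Cubic

def cubic (n : ℝ) (u : Fin 3 → ℝ) : ℝ := ∏ k, u k - n * ∑ k, u k - 2 * n

/-- `∂ (cubic n u) / ∂ (u k)`: updating `u k` to `1` removes that factor from the product. -/
def cubicPartial (n : ℝ) (u : Fin 3 → ℝ) (k : Fin 3) : ℝ :=
  ∏ j, Function.update u k 1 j - n

theorem cubic_eq_cubic_succ_add (n : ℝ) (w : Fin 3 → ℝ) :
    cubic n w = cubic (n + 1) (w - 1) + ∑ k, cubicPartial n w k := by
  simp [cubic, cubicPartial, Fin.prod_univ_three, Fin.sum_univ_three, Function.update_apply]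
  ring

theorem cubic_sub (n : ℝ) (w x : Fin 3 → ℝ) :
    cubic n (w - x) = cubic n w - ∑ k, x k * cubicPartial n w k +
      (x 0 * x 1 * (w 2 - x 2) + x 0 * x 2 * w 1 + x 1 * x 2 * w 0) := by
  simp [cubic, cubicPartial, Fin.prod_univ_three, Fin.sum_univ_three, Function.update_apply]
  ring

theorem cubic_sub_single (n : ℝ) (w : Fin 3 → ℝ) (k : Fin 3) (c : ℝ) :
    cubic n (w - Pi.single k c) = cubic n w - c * cubicPartial n w k := by
  fin_cases k <;>
  · simp [cubic, cubicPartial, Fin.prod_univ_three, Fin.sum_univ_three, Function.update_apply]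
    ring

theorem mul_cubicPartial_sub_sum (n : ℝ) (w : Fin 3 → ℝ) (k : Fin 3) :
    w k * cubicPartial n w k - ∑ j, cubicPartial n w j =
      cubic (n + 1) (w - 1) + n * (∑ j, w j - w k + 2) := by
  fin_cases k <;>
  · simp [cubic, cubicPartial, Fin.prod_univ_three, Fin.sum_univ_three, Function.update_apply]
    ring

variable {n : ℝ} {w : Fin 3 → ℝ}

theorem cubicPartial_pos (hn : 0 ≤ n) (hw : 1 ≤ w) (hF : 0 ≤ cubic (n + 1) (w - 1))
    (k : Fin 3) : 0 < cubicPartial n w k := by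
  have h0 : 0 ≤ w 0 - 1 := sub_nonneg.2 (hw 0)
  have h1 : 0 ≤ w 1 - 1 := sub_nonneg.2 (hw 1)
  have h2 : 0 ≤ w 2 - 1 := sub_nonneg.2 (hw 2)
  simp [cubic, Fin.prod_univ_three, Fin.sum_univ_three] at hF
  fin_cases k <;> simp [cubicPartial, Fin.prod_univ_three, Function.update_apply] <;>
    nlinarith [mul_nonneg h0 h1, mul_nonneg h0 h2, mul_nonneg h1 h2]

theorem sum_cubicPartial_le_mul (hn : 0 ≤ n) (hw : 0 ≤ w)
    (hF : 0 ≤ cubic (n + 1) (w - 1)) (k : Fin 3) :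
    ∑ j, cubicPartial n w j ≤ w k * cubicPartial n w k := by
  have hwk : w k ≤ ∑ j, w j := single_le_sum (fun j _ => hw j) (mem_univ k)
  have := mul_cubicPartial_sub_sum n w k
  nlinarith

theorem cubic_sub_nonneg {x : Fin 3 → ℝ} (hF : 0 ≤ cubic (n + 1) (w - 1))
    (hx : ∀ k, 0 ≤ x k) (hxw : ∀ k, x k ≤ w k)
    (hxA : ∑ k, x k * cubicPartial n w k = ∑ k, cubicPartial n w k) :
    0 ≤ cubic n (w - x) := by
  have e0 : 0 ≤ x 0 * x 1 * (w 2 - x 2) :=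
    mul_nonneg (mul_nonneg (hx 0) (hx 1)) (sub_nonneg.2 (hxw 2))
  have e1 : 0 ≤ x 0 * x 2 * w 1 := mul_nonneg (mul_nonneg (hx 0) (hx 2)) ((hx 1).trans (hxw 1))
  have e2 : 0 ≤ x 1 * x 2 * w 0 := mul_nonneg (mul_nonneg (hx 1) (hx 2)) ((hx 0).trans (hxw 0))
  rw [cubic_sub, cubic_eq_cubic_succ_add, hxA]
  linarith

theorem cubic_sub_single_eq_zero (hF : cubic (n + 1) (w - 1) = 0) {k : Fin 3}
    (hA : cubicPartial n w k ≠ 0) :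
    cubic n (w - Pi.single k ((∑ j, cubicPartial n w j) / cubicPartial n w k)) = 0 := by
  rw [cubic_sub_single, cubic_eq_cubic_succ_add, hF, div_mul_cancel₀ _ hA]
  ring

end Cubic

section Certificate

def slack (n : ℕ) (ℓ : ℝ) (s : Fin K → ℝ) : Fin K → ℝ := fun k => ℓ - s k - n

theorem slack_succ (n : ℕ) (ℓ : ℝ) (s : Fin K → ℝ) : slack (n + 1) ℓ s = slack n ℓ s - 1 := by
  ext k
  simp only [slack, Pi.sub_apply, Pi.one_apply, Nat.cast_succ]
  ring

theorem slack_add (n : ℕ) (ℓ : ℝ) (s x : Fin K → ℝ) :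
    slack n ℓ (s + x) = slack n ℓ s - x := by
  ext k
  simp only [slack, Pi.sub_apply, Pi.add_apply]
  ring

theorem V_le_of_cubic_nonneg (n : ℕ) (ℓ : ℝ) (s : Fin 3 → ℝ) (hu : 0 ≤ slack n ℓ s)
    (hF : 0 ≤ cubic n (slack n ℓ s)) : V 3 n s ≤ ℓ := by
  induction n generalizing s with
  | zero => exact ciSup_le fun k => by simpa [slack] using hu k
  | succ n ih =>
    set w := slack n ℓ s
    rw [slack_succ] at hu hF
    push_cast at hF
    have hw : 1 ≤ w := sub_nonneg.1 hu
    set A := cubicPartial n w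
    have hA : ∀ k, 0 < A k := cubicPartial_pos n.cast_nonneg hw hF
    have hSA : ∀ k, ∑ j, A j ≤ w k * A k :=
      sum_cubicPartial_le_mul n.cast_nonneg (zero_le_one.trans hw) hF
    have hS : 0 < ∑ j, A j := sum_pos (fun k _ => hA k) univ_nonempty
    have hr : (fun k => A k / ∑ j, A j) ∈ simplexInt 3 :=
      ⟨fun k => div_pos (hA k) hS, by rw [← sum_div, div_self hS.ne']⟩
    refine (V_succ_le_worstCase hr).trans (worstCase_le fun q hq => ?_)
    set x : Fin 3 → ℝ := fun k => q k / (A k / ∑ j, A j)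
    change V 3 n (s + x) ≤ ℓ
    have hx : ∀ k, 0 ≤ x k := fun k => div_nonneg (hq.1 k) (div_pos (hA k) hS).le
    have hxA : ∀ k, x k * A k = q k * ∑ j, A j := fun k => by
      simp only [x]
      field_simp [(hA k).ne']
    have hxw : ∀ k, x k ≤ w k := fun k => by
      refine le_of_mul_le_mul_right ?_ (hA k)
      rw [hxA]
      exact (mul_le_of_le_one_left hS.le (le_one_of_mem_simplex hq k)).trans (hSA k)
    have hsum : ∑ k, x k * A k = ∑ k, A k := by
      simp only [hxA, ← sum_mul, hq.2, one_mul]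
    refine ih _ ?_ ?_ <;> rw [slack_add]
    · exact fun k => sub_nonneg.2 (hxw k)
    · exact cubic_sub_nonneg hF hx hxw hsum

theorem le_V_of_cubic_eq_zero (n : ℕ) (ℓ : ℝ) (s : Fin 3 → ℝ) (hu : 0 ≤ slack n ℓ s)
    (hF : cubic n (slack n ℓ s) = 0) : ℓ ≤ V 3 n s := by
  induction n generalizing s with
  | zero =>
    obtain ⟨k, -, hk⟩ := prod_eq_zero_iff.1 (by simpa [cubic] using hF)
    exact le_ciSup_of_le (Finite.bddAbove_range s) k (by simp [slack] at hk; linarith)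
  | succ n ih =>
    set w := slack n ℓ s
    rw [slack_succ] at hu hF
    push_cast at hF
    have hw : 1 ≤ w := sub_nonneg.1 hu
    set A := cubicPartial n w
    have hA : ∀ k, 0 < A k := cubicPartial_pos n.cast_nonneg hw hF.ge
    have hSA : ∀ k, ∑ j, A j ≤ w k * A k :=
      sum_cubicPartial_le_mul n.cast_nonneg (zero_le_one.trans hw) hF.ge
    have hS : 0 < ∑ j, A j := sum_pos (fun k _ => hA k) univ_nonempty
    refine le_V_succ fun r hr => ?_
    obtain ⟨k, -, hk⟩ : ∃ k ∈ univ, r k ≤ A k / ∑ j, A j :=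
      exists_le_of_sum_le univ_nonempty (by rw [hr.2, ← sum_div, div_self hS.ne'])
    set c := (∑ j, A j) / A k
    have hcr : c ≤ 1 / r k := by
      simpa only [one_div_div, div_one] using one_div_le_one_div_of_le (hr.1 k) hk
    have hcw : c ≤ w k := (div_le_iff₀ (hA k)).2 (hSA k)
    have hslack : slack n ℓ (s + Pi.single k c) = w - Pi.single k c := slack_add n ℓ s _
    calc ℓ ≤ V 3 n (s + Pi.single k c) := by
          refine ih _ ?_ ?_ <;> rw [hslack]
          · intro j
            by_cases h : j = k
            · subst h; simp [hcw]
            · simpa [h] using zero_le_one.trans (hw j)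
          · exact cubic_sub_single_eq_zero hF (hA k).ne'
      _ ≤ V 3 n (fun j => s j + (Pi.single k 1 : Fin 3 → ℝ) j / r j) := V_mono n fun j => by
          by_cases h : j = k
          · subst h; simpa using hcr
          · simp [h]
      _ ≤ worstCase 3 n s r := le_worstCase hr (single_mem_simplex k)

theorem V_eq_of_cubic_eq_zero (n : ℕ) (ℓ : ℝ) (s : Fin 3 → ℝ) (hu : 0 ≤ slack n ℓ s)
    (hF : cubic n (slack n ℓ s) = 0) : V 3 n s = ℓ :=
  (V_le_of_cubic_nonneg n ℓ s hu hF.ge).antisymm (le_V_of_cubic_eq_zero n ℓ s hu hF)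

end Certificate

section Trisection

open Real

theorem cos_third_arccos_nonneg (y : ℝ) : 0 ≤ cos ((1 / 3) * arccos y) :=
  cos_nonneg_of_mem_Icc
    ⟨by linarith [arccos_nonneg y, pi_pos], by linarith [arccos_le_pi y, pi_pos]⟩

theorem trisection_root (a y : ℝ) (hy₀ : -1 ≤ y) (hy₁ : y ≤ 1) :
    (2 * a * cos ((1 / 3) * arccos y)) ^ 3 - 3 * a ^ 2 * (2 * a * cos ((1 / 3) * arccos y)) =
      2 * a ^ 3 * y := by
  have h := cos_three_mul ((1 / 3) * arccos y)
  rw [← mul_assoc, mul_one_div_cancel three_ne_zero, one_mul, cos_arccos hy₀ hy₁] at h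
  linear_combination (-2 * a ^ 3) * h

theorem trisection_root_inv_sqrt {T : ℝ} (hT : 1 ≤ T) :
    (2 * √T * cos ((1 / 3) * arccos (T ^ (-(1 : ℝ) / 2)))) ^ 3 -
      3 * T * (2 * √T * cos ((1 / 3) * arccos (T ^ (-(1 : ℝ) / 2)))) - 2 * T = 0 := by
  have hT₀ : 0 ≤ T := zero_le_one.trans hT
  have hsqrt : 1 ≤ √T := one_le_sqrt.2 hT
  have hy : T ^ (-(1 : ℝ) / 2) = (√T)⁻¹ := by rw [sqrt_eq_rpow, neg_div, rpow_neg hT₀]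
  have hcube : √T ^ 3 * T ^ (-(1 : ℝ) / 2) = T := by
    rw [hy]
    field_simp
    exact sq_sqrt hT₀
  have h := trisection_root (√T) (T ^ (-(1 : ℝ) / 2))
    (by rw [hy]; linarith [inv_nonneg.2 (sqrt_nonneg T)])
    (by rw [hy]; exact inv_le_one_of_one_le₀ hsqrt)
  linear_combination h + 3 * (2 * √T * cos ((1 / 3) * arccos (T ^ (-(1 : ℝ) / 2)))) *
    sq_sqrt hT₀ + 2 * hcube

end Trisection

end Bookmaking

open Bookmaking in
/-- For ternary games (`K = 3`), the optimal bookmaking loss is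
`T + 2√T · cos((1/3) arccos (T^{-1/2}))`. -/
theorem optimal_loss_ternary (T : ℕ) (hT : 1 ≤ T) :
    V 3 T 0 = (T : ℝ) +
      2 * Real.sqrt T * Real.cos ((1 / 3) * Real.arccos ((T : ℝ) ^ (-(1 : ℝ) / 2))) := by
  have hx : 0 ≤ 2 * Real.sqrt T * Real.cos ((1 / 3) * Real.arccos ((T : ℝ) ^ (-(1 : ℝ) / 2))) :=
    mul_nonneg (by positivity) (cos_third_arccos_nonneg _)
  refine V_eq_of_cubic_eq_zero T _ 0 (fun _ => by simpa [slack] using hx) ?_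
  simp only [cubic, slack, Pi.zero_apply, sub_zero, add_sub_cancel_left, prod_const, sum_const,
    card_univ, Fintype.card_fin, nsmul_eq_mul]
  linear_combination trisection_root_inv_sqrt (T := T) (by exact_mod_cast hT)
end
end

section
/- For every integer K ≥ 1 and every real number x, the sequence T ↦ T^{−K/2} · P_{T,K}(T + √T · x), indexed by natural numbers T, converges to He_K(x) as T → ∞. -/
open scoped BigOperators

noncomputable section

/-- The `K`-th probabilist's Hermite polynomial, evaluated at a real `x`. -/
noncomputable def He (K : ℕ) (x : ℝ) : ℝ := Polynomial.aeval x (Polynomial.hermite K)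

/-!
With `a_j = (-T)^{(j)}`, `P_{T,K}(x) = ∑ C(K,m) a_{K-m} x^m` is the Appell sequence attached to
`(a_j)`, and the recursion `a_{j+1} = (-T + j) a_j` of the rising factorial yields the three-term
recurrence `P_{K+2} = (x - T + K + 1) P_{K+1} - (K + 1) x P_K`. Substituting `x = T + √T y` and
scaling by `√T^{-K}` turns it into
`q_{K+2} = (y + (K+1)/√T) q_{K+1} - (K+1) (1 + y/√T) q_K`,
a perturbation of the Hermite recurrence `He_{K+2} = y He_{K+1} - (K+1) He_K` that vanishes as
`T → ∞`. Since `q_0 = He_0 = 1` and `q_1 = He_1(y) = y`, induction on `K` gives `q_K → He_K(y)`.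
-/

open Filter Topology

section Appell

variable {R : Type*} [CommSemiring R]

def appell (a : ℕ → R) (K : ℕ) (x : R) : R :=
  ∑ m ∈ Finset.range (K + 1), (K.choose m : R) * a (K - m) * x ^ m

theorem appell_succ (a : ℕ → R) (K : ℕ) (x : R) :
    appell a (K + 1) x = appell (fun j => a (j + 1)) K x + x * appell a K x := by
  have pascal := Finset.sum_choose_succ_mul (fun i j => a j * x ^ i) K
  simp only [appell, Finset.mul_sum, ← mul_assoc] at pascal ⊢
  rw [pascal]
  congr 1
  · refine Finset.sum_congr rfl fun m hm => ?_
    rw [Nat.sub_add_comm (Finset.mem_range_succ_iff.mp hm)]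
  · refine Finset.sum_congr rfl fun m _ => ?_
    ring

theorem sum_natCast_mul_choose_mul_eq_mul_appell (a : ℕ → R) (K : ℕ) (x : R) :
    ∑ m ∈ Finset.range (K + 2), (m : R) * (K + 1).choose m * a (K + 1 - m) * x ^ m
      = (K + 1) * x * appell a K x := by
  rw [Finset.sum_range_succ', appell, Finset.mul_sum]
  simp only [Nat.cast_zero, zero_mul, add_zero, Nat.add_sub_add_right]
  refine Finset.sum_congr rfl fun m _ => ?_
  have hchoose : ((m : R) + 1) * (K + 1).choose (m + 1) = (K + 1) * K.choose m := by
    have hN : (m + 1) * (K + 1).choose (m + 1) = (K + 1) * K.choose m := by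
      rw [Nat.add_one_mul_choose_eq, mul_comm]
    exact_mod_cast congrArg (Nat.cast : ℕ → R) hN
  calc ((m + 1 : ℕ) : R) * (K + 1).choose (m + 1) * a (K - m) * x ^ (m + 1)
      = ((m : R) + 1) * (K + 1).choose (m + 1) * (a (K - m) * x ^ m * x) := by
        rw [pow_succ, Nat.cast_succ]
        ring
    _ = (K + 1) * x * (K.choose m * a (K - m) * x ^ m) := by
        rw [hchoose]
        ring

end Appell

theorem appell_succ_succ_of_rec {R : Type*} [CommRing R] {a : ℕ → R} {c : R}
    (ha : ∀ j, a (j + 1) = (c + j) * a j) (K : ℕ) (x : R) :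
    appell a (K + 2) x = (x + c + (K + 1)) * appell a (K + 1) x - (K + 1) * x * appell a K x := by
  have shift : appell (fun j => a (j + 1)) (K + 1) x
      = (c + (K + 1)) * appell a (K + 1) x
        - ∑ m ∈ Finset.range (K + 2), (m : R) * (K + 1).choose m * a (K + 1 - m) * x ^ m := by
    rw [appell, appell, Finset.mul_sum, ← Finset.sum_sub_distrib]
    refine Finset.sum_congr rfl fun m hm => ?_
    rw [ha, Nat.cast_sub (Finset.mem_range_succ_iff.mp hm)]
    push_cast
    ring
  rw [appell_succ a (K + 1), shift, sum_natCast_mul_choose_mul_eq_mul_appell]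
  ring

namespace Polynomial

theorem derivative_hermite_succ (n : ℕ) :
    derivative (hermite (n + 1)) = (n + 1 : ℤ[X]) * hermite n := by
  induction n with
  | zero => simp
  | succ n ih =>
    rw [hermite_succ (n + 1), derivative_sub, derivative_mul, derivative_X, ih,
      derivative_mul, derivative_add, derivative_natCast, derivative_one, hermite_succ n]
    push_cast
    ring

theorem hermite_succ_succ (n : ℕ) :
    hermite (n + 2) = X * hermite (n + 1) - (n + 1 : ℤ[X]) * hermite n := by
  rw [hermite_succ (n + 1), derivative_hermite_succ]

end Polynomial

theorem He_succ_succ (n : ℕ) (y : ℝ) : He (n + 2) y = y * He (n + 1) y - (n + 1) * He n y := by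
  simp only [He, Polynomial.hermite_succ_succ, map_sub, map_mul, map_add, map_natCast, map_one,
    Polynomial.aeval_X]

theorem tendsto_He_of_perturbed_recurrence {α : Type*} {l : Filter α} {ε : α → ℝ}
    (hε : Tendsto ε l (𝓝 0)) {y : ℝ} {q : ℕ → α → ℝ}
    (h0 : Tendsto (q 0) l (𝓝 1)) (h1 : Tendsto (q 1) l (𝓝 y))
    (hrec : ∀ K : ℕ, ∀ᶠ t in l,
      q (K + 2) t = (y + (K + 1) * ε t) * q (K + 1) t - (K + 1) * (1 + y * ε t) * q K t)
    (K : ℕ) : Tendsto (q K) l (𝓝 (He K y)) := by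
  induction K using Nat.twoStepInduction with
  | zero => simpa [He] using h0
  | one => simpa [He, Polynomial.hermite_one] using h1
  | more K ihK ihK1 =>
    have lim : Tendsto
        (fun t => (y + (K + 1) * ε t) * q (K + 1) t - (K + 1) * (1 + y * ε t) * q K t)
        l (𝓝 ((y + (K + 1) * 0) * He (K + 1) y - (K + 1) * (1 + y * 0) * He K y)) :=
      ((tendsto_const_nhds.add (hε.const_mul _)).mul ihK1).sub
        ((tendsto_const_nhds.mul (tendsto_const_nhds.add (hε.const_mul y))).mul ihK)
    rw [He_succ_succ, tendsto_congr' (hrec K)]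
    simpa using lim

theorem rpow_neg_natCast_div_two {t : ℝ} (ht : 0 ≤ t) (K : ℕ) :
    t ^ (-(K : ℝ) / 2) = (√t)⁻¹ ^ K := by
  rw [Real.sqrt_eq_rpow, ← Real.inv_rpow ht, ← Real.rpow_natCast,
    ← Real.rpow_mul (inv_nonneg.mpr ht), Real.inv_rpow ht, ← Real.rpow_neg ht]
  ring_nf

theorem rise_succ (a : ℝ) (j : ℕ) : rise a (j + 1) = (a + j) * rise a j := by
  rw [rise, Finset.prod_range_succ, mul_comm, rise]

theorem P_eq_appell (T K : ℕ) (x : ℝ) : P T K x = appell (rise (-(T : ℝ))) K x := rfl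

theorem P_one (T : ℕ) (x : ℝ) : P T 1 x = x - T := by
  simp [P, rise, Finset.sum_range_succ, sub_eq_add_neg, add_comm]

theorem P_succ_succ (T K : ℕ) (x : ℝ) :
    P T (K + 2) x = (x - T + (K + 1)) * P T (K + 1) x - (K + 1) * x * P T K x := by
  simp only [P_eq_appell]
  rw [appell_succ_succ_of_rec (rise_succ _)]
  ring

theorem rescaled_P_succ_succ {T : ℕ} (hT : T ≠ 0) (K : ℕ) (y : ℝ) :
    (√T)⁻¹ ^ (K + 2) * P T (K + 2) (T + √T * y)
      = (y + (K + 1) * (√T)⁻¹) * ((√T)⁻¹ ^ (K + 1) * P T (K + 1) (T + √T * y))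
        - (K + 1) * (1 + y * (√T)⁻¹) * ((√T)⁻¹ ^ K * P T K (T + √T * y)) := by
  have hs : √(T : ℝ) ≠ 0 := by positivity
  have hsq : √(T : ℝ) ^ 2 = T := Real.sq_sqrt (Nat.cast_nonneg T)
  rw [P_succ_succ]
  -- `s` is made opaque so that rewriting `T = s ^ 2` does not reach inside `s = √T`.
  set s := √(T : ℝ)
  clear_value s
  rw [← hsq, pow_succ, pow_succ, pow_succ]
  field_simp
  ring

theorem rescaled_P_tendsto_hermite_general (K : ℕ) (x : ℝ) :
    Filter.Tendsto
      (fun T : ℕ => (T : ℝ) ^ (-(K : ℝ) / 2) * P T K ((T : ℝ) + Real.sqrt T * x))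
      Filter.atTop (nhds (He K x)) := by
  have hε : Tendsto (fun T : ℕ => (√T)⁻¹) atTop (𝓝 0) :=
    tendsto_inv_atTop_zero.comp (Real.tendsto_sqrt_atTop.comp tendsto_natCast_atTop_atTop)
  simp_rw [rpow_neg_natCast_div_two (Nat.cast_nonneg _)]
  refine tendsto_He_of_perturbed_recurrence (q := fun K T => (√T)⁻¹ ^ K * P T K (T + √T * x))
    hε ?_ ?_ (fun K => (eventually_ne_atTop 0).mono fun T hT => rescaled_P_succ_succ hT K x) K
  · simp [P, rise]
  · refine tendsto_const_nhds.congr' ((eventually_ne_atTop 0).mono fun T hT => ?_)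
    have hs : √(T : ℝ) ≠ 0 := by positivity
    dsimp only
    rw [pow_one, P_one, add_sub_cancel_left, inv_mul_cancel_left₀ hs]

/-- `T^{−K/2} · P_{T,K}(T + √T·x) → He_K(x)` as `T → ∞`. -/
theorem rescaled_P_tendsto_hermite (K : ℕ) (hK : 1 ≤ K) (x : ℝ) :
    Filter.Tendsto
      (fun T : ℕ => (T : ℝ) ^ (-(K : ℝ) / 2) * P T K ((T : ℝ) + Real.sqrt T * x))
      Filter.atTop (nhds (He K x)) :=
  rescaled_P_tendsto_hermite_general K x
end
end

section
/- For all integers K ≥ 1, H ≥ 1 and every s : Fin K → ℝ, the supremum over mixed bets in the recursion of the value function may be restricted to the vertices of the simplex: V H s = ⨅_{r ∈ Δ°_K} max_{k ∈ Fin K} V (H−1) (s + (1/(r k))·e_k). -/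
/-!
Jensen's inequality shows that a convex function of `q ↦ s + q / r` attains its supremum over the
simplex at a vertex, so the theorem follows once every `V K H` is known to be convex. Convexity,
together with monotonicity, propagates through the recursion with decisive bets: if `r₁` is good
for `p` and `r₂` for `q`, normalising `(a / r₁ + b / r₂)⁻¹` gives odds `r` with
`1 / r ≤ a / r₁ + b / r₂` coordinatewise (the harmonic mean is at most the arithmetic mean), and a
decisive bet under `r` from `a • p + b • q` is dominated by the convex combination of the
corresponding bets from `p` under `r₁` and from `q` under `r₂`.
-/

open scoped BigOperators

noncomputable section

open Set

theorem ConvexOn.sSup_image_stdSimplex_eq_iSup {ι E : Type*} [Fintype ι] [Nonempty ι]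
    [AddCommGroup E] [Module ℝ E] {f : E → ℝ} (hf : ConvexOn ℝ univ f) (x : ι → E) :
    sSup ((fun w => f (∑ i, w i • x i)) '' stdSimplex ℝ ι) = ⨆ i, f (x i) := by
  classical
  have jensen : ∀ w ∈ stdSimplex ℝ ι, f (∑ i, w i • x i) ≤ ⨆ i, f (x i) := fun w hw =>
    calc f (∑ i, w i • x i) ≤ ∑ i, w i • f (x i) :=
          hf.map_sum_le (fun i _ => hw.1 i) hw.2 fun i _ => mem_univ _
      _ ≤ ∑ i, w i • ⨆ j, f (x j) := by
          gcongr with i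
          · exact hw.1 i
          · exact le_ciSup (finite_range fun j => f (x j)).bddAbove i
      _ = ⨆ i, f (x i) := by rw [← Finset.sum_smul, hw.2, one_smul]
  have vertex : ∀ i, (fun w => f (∑ j, w j • x j)) (Pi.single i 1 : ι → ℝ) = f (x i) := by
    intro i
    simp [Pi.single_apply, ite_smul]
  apply le_antisymm
  · exact csSup_le (Nonempty.of_subtype.image _) (forall_mem_image.2 jensen)
  · exact ciSup_le fun i => vertex i ▸
      le_csSup ⟨_, forall_mem_image.2 jensen⟩ (mem_image_of_mem _ (single_mem_stdSimplex ℝ i))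

theorem one_le_mul_div_add_div {a b x y : ℝ} (ha : 0 ≤ a) (hb : 0 ≤ b) (hab : a + b = 1)
    (hx : 0 < x) (hy : 0 < y) : 1 ≤ (a * x + b * y) * (a / x + b / y) := by
  rw [div_add_div _ _ hx.ne' hy.ne', mul_div_assoc', le_div_iff₀ (mul_pos hx hy)]
  have key : (a * x + b * y) * (a * y + x * b) = x * y * (a + b) ^ 2 + a * b * (x - y) ^ 2 := by
    ring
  rw [key, hab]
  nlinarith [mul_nonneg (mul_nonneg ha hb) (sq_nonneg (x - y))]

theorem le_mul_sInf_add_mul_sInf {α β : Type*} {S : Set α} {T : Set β} (hS : S.Nonempty)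
    (hT : T.Nonempty) (g : α → ℝ) (h : β → ℝ) {a b c : ℝ} (ha : 0 ≤ a) (hb : 0 ≤ b)
    (H : ∀ x ∈ S, ∀ y ∈ T, c ≤ a * g x + b * h y) :
    c ≤ a * sInf (g '' S) + b * sInf (h '' T) := by
  have := hS.to_subtype
  have := hT.to_subtype
  rw [sInf_image', sInf_image', Real.mul_iInf_of_nonneg ha, Real.mul_iInf_of_nonneg hb]
  exact le_ciInf_add_ciInf fun x y => H x x.2 y y.2

theorem convexOn_iSup_apply {ι : Type*} [Finite ι] [Nonempty ι] :
    ConvexOn ℝ univ fun s : ι → ℝ => ⨆ i, s i := by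
  refine ⟨convex_univ, fun p _ q _ a b ha hb _ => ciSup_le fun i => ?_⟩
  change a * p i + b * q i ≤ a * (⨆ i, p i) + b * ⨆ i, q i
  gcongr
  · exact le_ciSup (finite_range p).bddAbove i
  · exact le_ciSup (finite_range q).bddAbove i

section DecisiveBellman

variable {K : ℕ}

def decisiveValue (f : (Fin K → ℝ) → ℝ) (s r : Fin K → ℝ) : ℝ :=
  ⨆ k, f (s + Pi.single k (1 / r k))

def decisiveBellman (f : (Fin K → ℝ) → ℝ) (s : Fin K → ℝ) : ℝ :=
  sInf (decisiveValue f s '' simplexInt K)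

variable {f : (Fin K → ℝ) → ℝ}

theorem apply_add_single_le_decisiveValue (s r : Fin K → ℝ) (k : Fin K) :
    f (s + Pi.single k (1 / r k)) ≤ decisiveValue f s r :=
  le_ciSup (f := fun k => f (s + Pi.single k (1 / r k))) (finite_range _).bddAbove k

theorem decisiveValue_mono (hf : Monotone f) (r : Fin K → ℝ) :
    Monotone fun s => decisiveValue f s r :=
  fun _ _ hst => ciSup_mono (finite_range _).bddAbove fun _ => hf (add_le_add hst le_rfl)

variable [Nonempty (Fin K)]

theorem simplexInt_nonempty : (simplexInt K).Nonempty := by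
  have hK : (0 : ℝ) < K := by exact_mod_cast Fin.pos_iff_nonempty.2 ‹_›
  refine ⟨fun _ => 1 / K, fun _ => by positivity, ?_⟩
  simp [hK.ne']

theorem exists_mem_simplexInt_ge {w : Fin K → ℝ} (hw : ∀ k, 0 < w k) (hsum : ∑ k, w k ≤ 1) :
    ∃ r ∈ simplexInt K, w ≤ r := by
  have hS : 0 < ∑ k, w k := Finset.sum_pos (fun k _ => hw k) Finset.univ_nonempty
  refine ⟨fun k => w k / ∑ j, w j, ⟨fun k => div_pos (hw k) hS, ?_⟩,
    fun k => le_div_self (hw k).le hS hsum⟩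
  rw [← Finset.sum_div, div_self hS.ne']

theorem le_decisiveValue (hf : Monotone f) (s : Fin K → ℝ) {r : Fin K → ℝ}
    (hr : r ∈ simplexInt K) : f s ≤ decisiveValue f s r := by
  let k := Classical.arbitrary (Fin K)
  calc f s ≤ f (s + Pi.single k (1 / r k)) :=
        hf (le_add_of_nonneg_right (Pi.single_nonneg.2 (one_div_pos.2 (hr.1 k)).le))
    _ ≤ decisiveValue f s r := apply_add_single_le_decisiveValue s r k

theorem bddBelow_decisiveValue_image (hf : Monotone f) (s : Fin K → ℝ) :
    BddBelow (decisiveValue f s '' simplexInt K) :=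
  ⟨f s, forall_mem_image.2 fun _ hr => le_decisiveValue hf s hr⟩

theorem decisiveBellman_mono (hf : Monotone f) : Monotone (decisiveBellman f) := fun s _ hst =>
  le_csInf (simplexInt_nonempty.image _) <| forall_mem_image.2 fun r hr =>
    (csInf_le (bddBelow_decisiveValue_image hf s) (mem_image_of_mem _ hr)).trans
      (decisiveValue_mono hf r hst)

theorem exists_decisiveValue_smul_add_smul_le (hf : Monotone f) (hconv : ConvexOn ℝ univ f)
    {a b : ℝ} (ha : 0 ≤ a) (hb : 0 ≤ b) (hab : a + b = 1) (p q : Fin K → ℝ)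
    {r₁ r₂ : Fin K → ℝ} (hr₁ : r₁ ∈ simplexInt K) (hr₂ : r₂ ∈ simplexInt K) :
    ∃ r ∈ simplexInt K,
      decisiveValue f (a • p + b • q) r ≤ a * decisiveValue f p r₁ + b * decisiveValue f q r₂ := by
  set u : Fin K → ℝ := fun k => a / r₁ k + b / r₂ k
  have hmean k : 1 ≤ (a * r₁ k + b * r₂ k) * u k :=
    one_le_mul_div_add_div ha hb hab (hr₁.1 k) (hr₂.1 k)
  have hu k : 0 < u k := by
    have := hr₁.1 k
    have := hr₂.1 k
    exact pos_of_mul_pos_right (one_pos.trans_le (hmean k)) (by positivity)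
  have hsum : ∑ k, (u k)⁻¹ ≤ 1 :=
    calc ∑ k, (u k)⁻¹ ≤ ∑ k, (a * r₁ k + b * r₂ k) :=
          Finset.sum_le_sum fun k _ => (inv_le_iff_one_le_mul₀ (hu k)).2 (hmean k)
      _ = 1 := by simp [Finset.sum_add_distrib, ← Finset.mul_sum, hr₁.2, hr₂.2, hab]
  obtain ⟨r, hr, hur⟩ := exists_mem_simplexInt_ge (fun k => inv_pos.2 (hu k)) hsum
  refine ⟨r, hr, ciSup_le fun k => ?_⟩
  have hbet : 1 / r k ≤ u k := by
    simpa using one_div_le_one_div_of_le (inv_pos.2 (hu k)) (hur k)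
  have hcomb : a • (p + Pi.single k (1 / r₁ k)) + b • (q + Pi.single k (1 / r₂ k)) =
      a • p + b • q + Pi.single k (u k) := by
    ext j
    rcases eq_or_ne j k with rfl | hjk <;> simp [*, u]
    ring
  calc f (a • p + b • q + Pi.single k (1 / r k))
      ≤ f (a • (p + Pi.single k (1 / r₁ k)) + b • (q + Pi.single k (1 / r₂ k))) := by
        rw [hcomb]
        exact hf (add_le_add le_rfl (Pi.single_le_single.2 hbet))
    _ ≤ a * f (p + Pi.single k (1 / r₁ k)) + b * f (q + Pi.single k (1 / r₂ k)) :=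
        hconv.2 (mem_univ _) (mem_univ _) ha hb hab
    _ ≤ a * decisiveValue f p r₁ + b * decisiveValue f q r₂ := by
        gcongr
        · exact apply_add_single_le_decisiveValue p r₁ k
        · exact apply_add_single_le_decisiveValue q r₂ k

theorem decisiveBellman_convexOn (hf : Monotone f) (hconv : ConvexOn ℝ univ f) :
    ConvexOn ℝ univ (decisiveBellman f) := by
  refine ⟨convex_univ, fun p _ q _ a b ha hb hab => ?_⟩
  refine le_mul_sInf_add_mul_sInf simplexInt_nonempty simplexInt_nonempty _ _ ha hb
    fun r₁ hr₁ r₂ hr₂ => ?_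
  obtain ⟨r, hr, hle⟩ := exists_decisiveValue_smul_add_smul_le hf hconv ha hb hab p q hr₁ hr₂
  exact (csInf_le (bddBelow_decisiveValue_image hf _) (mem_image_of_mem _ hr)).trans hle

theorem V_succ_eq_decisiveBellman {H : ℕ} (hconv : ConvexOn ℝ univ (V K H)) (s : Fin K → ℝ) :
    V K (H + 1) s = decisiveBellman (V K H) s := by
  rw [V, decisiveBellman]
  refine congrArg sInf (image_congr fun r _ => ?_)
  rw [decisiveValue, ← hconv.sSup_image_stdSimplex_eq_iSup]
  refine congrArg sSup (image_congr fun q hq => congrArg _ ?_)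
  ext j
  simp [Finset.sum_add_distrib, ← Finset.sum_mul, hq.2, Pi.single_apply, div_eq_mul_inv]

theorem V_monotone_convexOn (H : ℕ) : Monotone (V K H) ∧ ConvexOn ℝ univ (V K H) := by
  induction H with
  | zero => exact ⟨fun _ _ hst => ciSup_mono (finite_range _).bddAbove hst, convexOn_iSup_apply⟩
  | succ H ih =>
    have hV : V K (H + 1) = decisiveBellman (V K H) := funext (V_succ_eq_decisiveBellman ih.2)
    rw [hV]
    exact ⟨decisiveBellman_mono ih.1, decisiveBellman_convexOn ih.1 ih.2⟩

end DecisiveBellman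

/-- The supremum over mixed bets in the value-function recursion can be restricted
to decisive bets (vertices of the simplex). -/
theorem decisive_gambler_optimal (K H : ℕ) (hK : 1 ≤ K) (hH : 1 ≤ H) (s : Fin K → ℝ) :
    V K H s =
      sInf ((fun r : Fin K → ℝ =>
        ⨆ k : Fin K, V K (H - 1) (fun j => s j + (if j = k then 1 / r k else 0)))
        '' simplexInt K) := by
  obtain ⟨H, rfl⟩ := Nat.exists_eq_add_of_le' hH
  have : Nonempty (Fin K) := ⟨⟨0, hK⟩⟩
  rw [Nat.add_sub_cancel, V_succ_eq_decisiveBellman (V_monotone_convexOn H).2 s]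
  unfold decisiveBellman decisiveValue
  simp only [Pi.add_def, Pi.single_apply]
end
end
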